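/- arXiv:1603.02671 — 2 statements merged into one kernel-verified Lean document; each statement's English description precedes it below -/
import Mathlib

section
/- Let C be a (possibly nonlinear) code of length N over an alphabet of size q with minimum distance d and dual distance d⊥, and let 1 ≤ s < d⊥ − 2 (in the sense that coordinates of a uniformly random codeword restricted to any d⊥ − 1 positions are uniformly distributed). Then the construction that takes a uniform random codeword whose first s coordinates equal the secret and distributes the remaining N − s coordinates as shares yields a (τ_1, τ_2, N − s)-ramp scheme with τ_1 = d⊥ − s − 1 and τ_2 = N − d + 1: any τ_2 shares determine the secret, and any τ_1 shares give no information about the secret. -/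
open Finset

/-!
Two codewords agreeing on `N - d + 1` coordinates lie at Hamming distance at most `d - 1`,
so they coincide; in particular they have the same secret. For secrecy, fixing the secret
and `τ₁` shares fixes `s + τ₁ ≤ d⊥ - 1` coordinates of the codeword, whose restriction to
them is uniform by the dual distance hypothesis.
-/

section Hamming

variable {ι α : Type*} [Fintype ι] [DecidableEq α]

theorem hammingDist_add_card_le_of_eqOn {u v : ι → α} {T : Finset ι}
    (h : ∀ i ∈ T, u i = v i) : hammingDist u v + #T ≤ Fintype.card ι := by
  classical
  have hdisj : Disjoint ({i | u i ≠ v i} : Finset ι) T :=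
    disjoint_left.mpr fun i hi hiT => (mem_filter.mp hi).2 (h i hiT)
  rw [hammingDist, ← card_union_of_disjoint hdisj]
  exact card_le_univ _

theorem eq_of_eqOn_of_minDist {C : Finset (ι → α)} {d : ℕ}
    (hdist : ∀ u ∈ C, ∀ v ∈ C, u ≠ v → d ≤ hammingDist u v) {T : Finset ι}
    (hT : Fintype.card ι < d + #T) {u v : ι → α} (hu : u ∈ C) (hv : v ∈ C)
    (huv : ∀ i ∈ T, u i = v i) : u = v := by
  by_contra hne
  have := hdist u hu v hv hne
  have := hammingDist_add_card_le_of_eqOn huv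
  omega

end Hamming

theorem eqOn_and_eqOn_iff_eqOn_piecewise {ι α : Type*} [DecidableEq ι] {A B : Finset ι}
    (hAB : Disjoint A B) (m y c : ι → α) :
    ((∀ i ∈ A, c i = m i) ∧ ∀ i ∈ B, c i = y i) ↔ ∀ i ∈ A ∪ B, c i = A.piecewise m y i := by
  simp only [mem_union, or_imp, forall_and]
  refine and_congr (forall₂_congr fun i hi => by rw [piecewise_eq_of_mem _ _ _ hi])
    (forall₂_congr fun i hi => by rw [piecewise_eq_of_notMem _ _ _ (disjoint_right.mp hAB hi)])

theorem stmt_12_general {Alph : Type*} [Fintype Alph] [DecidableEq Alph]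
    (N d dperp s : ℕ) (C : Finset (Fin N → Alph))
    (hdist : ∀ u ∈ C, ∀ v ∈ C, u ≠ v → d ≤ hammingDist u v)
    (hdual : ∀ T : Finset (Fin N), T.card ≤ dperp - 1 → ∀ y : Fin N → Alph,
      (C.filter (fun c => ∀ i ∈ T, c i = y i)).card * Fintype.card Alph ^ T.card = C.card)
    (hs2 : s + 2 < dperp) (hsN : s ≤ N) :
    (∀ T : Finset (Fin N), (∀ i ∈ T, s ≤ (i : ℕ)) → T.card = N - d + 1 →
      ∀ u ∈ C, ∀ v ∈ C, (∀ i ∈ T, u i = v i) →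
        ∀ i : Fin N, (i : ℕ) < s → u i = v i) ∧
    (∀ T : Finset (Fin N), (∀ i ∈ T, s ≤ (i : ℕ)) → T.card ≤ dperp - s - 1 →
      ∀ m y : Fin N → Alph,
        (C.filter (fun c => (∀ i : Fin N, (i : ℕ) < s → c i = m i) ∧
            ∀ i ∈ T, c i = y i)).card * Fintype.card Alph ^ (s + T.card) = C.card) := by
  refine ⟨fun T _ hT u hu v hv huv i _ => ?_, fun T hTs hT m y => ?_⟩
  · rw [eq_of_eqOn_of_minDist hdist (by rw [Fintype.card_fin]; omega) hu hv huv]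
  · set F : Finset (Fin N) := {i | (i : ℕ) < s}
    have hF : #F = s := by rw [Fin.card_filter_val_lt, min_eq_right hsN]
    have hFT : Disjoint F T :=
      disjoint_left.mpr fun i hi hiT => (mem_filter.mp hi).2.not_ge (hTs i hiT)
    have hfilter : C.filter (fun c => (∀ i : Fin N, (i : ℕ) < s → c i = m i) ∧
        ∀ i ∈ T, c i = y i) = C.filter (fun c => ∀ i ∈ F ∪ T, c i = F.piecewise m y i) :=
      filter_congr fun c _ => by
        rw [← eqOn_and_eqOn_iff_eqOn_piecewise hFT]
        simp [F]
    rw [hfilter, ← hF, ← card_union_of_disjoint hFT]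
    exact hdual _ (by rw [card_union_of_disjoint hFT, hF]; omega) _

/-- Ramp schemes from codes (Paterson–Stinson): let `C` be a (possibly nonlinear)
code of length `N` over an alphabet `Alph` of size `q`, with minimum distance `d`
(every two distinct codewords are at Hamming distance at least `d`) and dual
distance `d⊥` (the restriction of the uniform distribution on `C` to any `d⊥ - 1`
coordinates is uniform).  Take `1 ≤ s` with `s + 2 < d⊥` (i.e. `s < d⊥ - 2`), let
the secret of a random codeword be its first `s` coordinates and the shares be the
remaining `N - s` coordinates.  Then:
  (reconstruction) any `τ₂ = N - d + 1` shares determine the secret, and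
  (secrecy) for any `τ₁ = d⊥ - s - 1` (or fewer) shares, the joint distribution of
  (secret, shares) is uniform — i.e. the shares give no information about the secret. -/
theorem stmt_12 {Alph : Type*} [Fintype Alph] [DecidableEq Alph]
    (N d dperp s : ℕ) (C : Finset (Fin N → Alph)) (hC : C.Nonempty)
    (hdist : ∀ u ∈ C, ∀ v ∈ C, u ≠ v → d ≤ hammingDist u v)
    (hdual : ∀ T : Finset (Fin N), T.card ≤ dperp - 1 → ∀ y : Fin N → Alph,
      (C.filter (fun c => ∀ i ∈ T, c i = y i)).card * Fintype.card Alph ^ T.card = C.card)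
    (hs1 : 1 ≤ s) (hs2 : s + 2 < dperp) (hsN : s ≤ N) :
    (∀ T : Finset (Fin N), (∀ i ∈ T, s ≤ (i : ℕ)) → T.card = N - d + 1 →
      ∀ u ∈ C, ∀ v ∈ C, (∀ i ∈ T, u i = v i) →
        ∀ i : Fin N, (i : ℕ) < s → u i = v i) ∧
    (∀ T : Finset (Fin N), (∀ i ∈ T, s ≤ (i : ℕ)) → T.card ≤ dperp - s - 1 →
      ∀ m y : Fin N → Alph,
        (C.filter (fun c => (∀ i : Fin N, (i : ℕ) < s → c i = m i) ∧
            ∀ i ∈ T, c i = y i)).card * Fintype.card Alph ^ (s + T.card) = C.card) :=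
  stmt_12_general N d dperp s C hdist hdual hs2 hsN
end

section
/- In the optimized multi-server Shacham-Waters scheme, where a^{(i)} = g(i) and b_j^{(i)} = f_j(i) for independently uniformly random polynomials g, f_1, ..., f_n ∈ F_q[x] of degree at most τ_1 − 1, any collection of τ_1 provers with indices I = {i_1, ..., i_{τ_1}} (distinct elements of F_q) observing all their message-tag pairs S_i[j] = b_j^{(i)} + a^{(i)}·M_i[j] learns nothing about the joint key tuple beyond what a single prover learns: conditioned on the observations, the tuple (a^{(i)})_{i∈I} is uniformly distributed over F_q^{τ_1}. -/
open Finset Function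

/-
Evaluating a polynomial of degree `< τ₁` at `τ₁` distinct points is multiplication of its
coefficient vector by an invertible Vandermonde matrix, hence a bijection. The observations
fix `a^(i) = g(I i)` to `A i` and then `f_j(I i)` to `S i j - A i * M i j`, so the coefficient
vectors of `g, f₁, …, f_n` are pinned down by a bijection from `F^{τ₁} × (F^{τ₁})^n` onto itself.
-/

theorem Matrix.vandermonde_mulVec_apply {R : Type*} [CommRing R] {m : ℕ} (v c : Fin m → R)
    (i : Fin m) : (Matrix.vandermonde v).mulVec c i = ∑ k, c k * v i ^ (k : ℕ) := by
  simp only [Matrix.mulVec, dotProduct, Matrix.vandermonde_apply, mul_comm]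

theorem Matrix.bijective_vandermonde_mulVec {K : Type*} [Field K] {m : ℕ} {v : Fin m → K}
    (hv : Injective v) : Bijective (Matrix.vandermonde v).mulVec := by
  have hunit : IsUnit (Matrix.vandermonde v) := by
    rw [Matrix.isUnit_iff_isUnit_det, isUnit_iff_ne_zero]
    exact Matrix.det_vandermonde_ne_zero_iff.2 hv
  exact ⟨Matrix.mulVec_injective_iff_isUnit.2 hunit, Matrix.mulVec_surjective_iff_isUnit.2 hunit⟩

theorem Finset.card_filter_eq_one_of_bijective {α β : Type*} [Fintype α] {f : α → β}
    (hf : Bijective f) (b : β) (p : α → Prop) [DecidablePred p] (hp : ∀ x, p x ↔ f x = b) :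
    (univ.filter p).card = 1 := by
  obtain ⟨x, hx⟩ := hf.2 b
  refine card_eq_one.2 ⟨x, ?_⟩
  ext y
  simp only [mem_filter, mem_univ, true_and, mem_singleton, hp, ← hx, hf.1.eq_iff]

theorem stmt_16_general {F : Type*} [Field F] [Fintype F] [DecidableEq F]
    (n τ₁ : ℕ)
    (I : Fin τ₁ → F) (hI : Function.Injective I)
    (M : Fin τ₁ → Fin n → F) :
    ∀ (S : Fin τ₁ → Fin n → F) (A : Fin τ₁ → F),
      (Finset.univ.filter
        (fun cgf : (Fin τ₁ → F) × (Fin n → Fin τ₁ → F) =>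
          (∀ i, (∑ k : Fin τ₁, cgf.1 k * I i ^ (k : ℕ)) = A i) ∧
          (∀ i j, S i j = (∑ k : Fin τ₁, cgf.2 j k * I i ^ (k : ℕ)) +
              (∑ k : Fin τ₁, cgf.1 k * I i ^ (k : ℕ)) * M i j))).card = 1 := by
  intro S A
  set eval := (Matrix.vandermonde I).mulVec
  have heval : Bijective eval := Matrix.bijective_vandermonde_mulVec hI
  refine card_filter_eq_one_of_bijective (heval.prodMap (Bijective.piMap fun _ : Fin n => heval))
    (A, fun j i => S i j - A i * M i j) _ fun ⟨cg, cf⟩ => ?_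
  simp only [Prod.map_apply, Pi.map_apply, Prod.mk.injEq, funext_iff, eval,
    Matrix.vandermonde_mulVec_apply]
  refine and_congr_right fun hg => ?_
  rw [forall_comm]
  refine forall_congr' fun j => forall_congr' fun i => ?_
  rw [hg i, eq_sub_iff_add_eq, eq_comm]

/-- In the optimized multi-server Shacham–Waters scheme, keys are derived as
`a^(i) = g(I i)` and `b_j^(i) = f_j(I i)` from independently uniform polynomials
`g, f₁, …, f_n` of degree `≤ τ₁ - 1`.  Any coalition of `τ₁` provers at distinct
indices `I` observing all message-tag pairs `S i j = f_j(I i) + g(I i)·M i j`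
learns nothing about the tuple `(a^(i))_{i}`: for every observation `S` and every
target tuple `A ∈ F^{τ₁}`, exactly one choice of the coefficient vectors of
`g, f₁, …, f_n` is consistent with both — i.e. conditioned on the observations,
`(g(I i))_i` is uniform on `F^{τ₁}`. -/
theorem stmt_16 {F : Type*} [Field F] [Fintype F] [DecidableEq F]
    (n τ₁ : ℕ) (hτ₁ : 1 ≤ τ₁)
    (I : Fin τ₁ → F) (hI : Function.Injective I)
    (M : Fin τ₁ → Fin n → F) :
    ∀ (S : Fin τ₁ → Fin n → F) (A : Fin τ₁ → F),
      (Finset.univ.filter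
        (fun cgf : (Fin τ₁ → F) × (Fin n → Fin τ₁ → F) =>
          (∀ i, (∑ k : Fin τ₁, cgf.1 k * I i ^ (k : ℕ)) = A i) ∧
          (∀ i j, S i j = (∑ k : Fin τ₁, cgf.2 j k * I i ^ (k : ℕ)) +
              (∑ k : Fin τ₁, cgf.1 k * I i ^ (k : ℕ)) * M i j))).card = 1 :=
  stmt_16_general n τ₁ I hI M
end
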